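/- arXiv:math/9806066 — 3 statements merged into one kernel-verified Lean document; each statement's English description precedes it below -/
import Mathlib

section
/- Let p be an odd prime, k ≥ 1 an integer, and d an integer which is a quadratic non-residue modulo p. Then the orthogonal direct sum [d/p^k] ⊕ [d/p^k] on (ℤ/p^kℤ)² is isomorphic, as a pairing, to [1/p^k] ⊕ [1/p^k]. -/
/-- Auxiliary: lifting sums of two squares along powers of an odd prime. -/
lemma sq_add_sq_lift (p : ℕ) (hp : p.Prime) (hodd : Odd p) (c : ℤ) (hc : ¬ (p:ℤ) ∣ c) :
    ∀ j : ℕ, 1 ≤ j → ∃ a b : ℤ, ¬ (p:ℤ) ∣ a ∧ a^2 + b^2 ≡ c [ZMOD (p:ℤ)^j] := by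
  haveI : Fact p.Prime := ⟨hp⟩
  have hp2 : p ≠ 2 := by
    rintro rfl
    exact (Nat.not_odd_iff_even.mpr (by norm_num)) hodd
  intro j hj
  induction j with
  | zero => omega
  | succ n ih =>
    rcases Nat.eq_or_lt_of_le hj with h1 | h1
    · -- base case n = 0
      obtain ⟨A, B, hAB⟩ := ZMod.sq_add_sq p ((c : ZMod p))
      have hne : A ≠ 0 ∨ B ≠ 0 := by
        by_contra h
        push_neg at h
        rw [h.1, h.2] at hAB
        simp at hAB
        exact hc ((ZMod.intCast_zmod_eq_zero_iff_dvd c p).mp hAB.symm)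
      have hex : ∃ A B : ZMod p, A ≠ 0 ∧ A^2 + B^2 = (c : ZMod p) := by
        rcases hne with h | h
        · exact ⟨A, B, h, hAB⟩
        · exact ⟨B, A, h, by rw [add_comm]; exact hAB⟩
      clear hAB hne
      obtain ⟨A, B, hA, hAB⟩ := hex
      have hn0 : n = 0 := by omega
      subst hn0
      refine ⟨(A.val : ℤ), (B.val : ℤ), ?_, ?_⟩
      · rw [Int.natCast_dvd_natCast]
        intro hdvd
        exact hA ((ZMod.val_eq_zero A).mp (Nat.eq_zero_of_dvd_of_lt hdvd (ZMod.val_lt A)))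
      · rw [pow_one, ← ZMod.intCast_eq_intCast_iff]
        push_cast
        simpa [ZMod.natCast_val, ZMod.cast_id] using hAB
    · -- inductive step: n ≥ 1
      obtain ⟨a, b, ha, hab⟩ := ih (by omega)
      obtain ⟨e, he⟩ := Int.ModEq.dvd hab  -- c - (a^2+b^2) = p^n * e
      have h2a : ((2 * a : ℤ) : ZMod p) ≠ 0 := by
        rw [Ne, ZMod.intCast_zmod_eq_zero_iff_dvd]
        intro hdvd
        rcases (Int.Prime.dvd_mul' hp hdvd) with h | h
        · have h2 : p ∣ 2 := by exact_mod_cast h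
          have := Nat.le_of_dvd (by norm_num) h2
          have := hp.two_le
          omega
        · exact ha h
      obtain ⟨T, hT⟩ : ∃ T : ZMod p, ((2 * a : ℤ) : ZMod p) * T = ((e : ℤ) : ZMod p) :=
        ⟨(((2 * a : ℤ) : ZMod p))⁻¹ * ((e : ℤ) : ZMod p),
          by rw [← mul_assoc, mul_inv_cancel₀ h2a, one_mul]⟩
      set t : ℤ := (T.val : ℤ) with ht
      have hTT : ((t : ℤ) : ZMod p) = T := by
        rw [ht]
        push_cast
        simp [ZMod.natCast_val, ZMod.cast_id]
      have htmod : (2 * a * t) ≡ e [ZMOD (p : ℤ)] := by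
        rw [← ZMod.intCast_eq_intCast_iff]
        push_cast
        push_cast at hTT hT
        rw [hTT]
        linear_combination hT
      refine ⟨a + t * (p:ℤ)^n, b, ?_, ?_⟩
      · intro hdvd
        apply ha
        have hdt : (p:ℤ) ∣ t * (p:ℤ)^n := Dvd.dvd.mul_left (dvd_pow_self _ (by omega)) t
        rw [add_comm] at hdvd
        exact (dvd_add_right hdt).mp hdvd
      · have key : (a + t * (p:ℤ)^n)^2 + b^2 - c
            = (((a^2 + b^2) - c) + 2*a*t*(p:ℤ)^n) + t^2 * ((p:ℤ)^n)^2 := by ring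
        have hd1 : ((p:ℤ)^(n+1)) ∣ ((a^2+b^2) - c) + 2*a*t*(p:ℤ)^n := by
          have h1' : (a^2+b^2) - c + 2*a*t*(p:ℤ)^n = (2*a*t - e) * (p:ℤ)^n := by
            have : (a^2+b^2) - c = -((p:ℤ)^n * e) := by rw [← he]; ring
            rw [this]; ring
          rw [h1', pow_succ, mul_comm ((p:ℤ)^n) (p:ℤ)]
          exact mul_dvd_mul (Int.ModEq.dvd htmod.symm) (dvd_refl _)
        have hd2 : ((p:ℤ)^(n+1)) ∣ t^2 * ((p:ℤ)^n)^2 := by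
          apply Dvd.dvd.mul_left
          rw [← pow_mul]
          exact pow_dvd_pow _ (by omega)
        have hdall : ((p:ℤ)^(n+1)) ∣ (a + t * (p:ℤ)^n)^2 + b^2 - c := by
          rw [key]; exact dvd_add hd1 hd2
        exact (Int.modEq_iff_dvd.mpr hdall).symm

/-- Auxiliary: the value of `m/p^k` in `AddCircle 1` only depends on `m` mod `p^k`. -/
lemma lpk_cong (p k : ℕ) (hp : p ≠ 0) (m m' : ℤ) (h : ((m : ZMod (p^k)) = (m' : ZMod (p^k)))) :
    (((m : ℚ) / (p:ℚ)^k : ℚ) : AddCircle (1:ℚ)) = ((m' : ℚ) / (p:ℚ)^k : ℚ) := by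
  have hpk : ((p:ℚ))^k ≠ 0 := by positivity
  rw [ZMod.intCast_eq_intCast_iff] at h
  obtain ⟨c, hc⟩ := (Int.modEq_iff_dvd.mp h : ((p^k : ℕ) : ℤ) ∣ m' - m)
  have hc' : (m' : ℚ) - (m : ℚ) = (p:ℚ)^k * (c : ℚ) := by
    exact_mod_cast congrArg (Int.cast : ℤ → ℚ) hc
  have hq : (m' : ℚ)/(p:ℚ)^k = (m:ℚ)/(p:ℚ)^k + (c:ℚ) := by
    field_simp
    linarith
  rw [hq]
  have : (((m:ℚ)/(p:ℚ)^k + (c:ℚ) : ℚ) : AddCircle (1:ℚ))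
      = (((m:ℚ)/(p:ℚ)^k : ℚ) : AddCircle (1:ℚ)) + ((c:ℚ) : AddCircle (1:ℚ)) := rfl
  rw [this, left_eq_add, AddCircle.coe_eq_zero_iff]
  exact ⟨c, by simp⟩

/-- Auxiliary: additivity of `m ↦ m/p^k` into `AddCircle 1`. -/
lemma lpk_add (p k : ℕ) (m m' : ℤ) :
    ((((m : ℚ) / (p:ℚ)^k : ℚ) : AddCircle (1:ℚ)) + ((m' : ℚ) / (p:ℚ)^k : ℚ)) =
      (((m + m' : ℤ) : ℚ) / (p:ℚ)^k : ℚ) := by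
  push_cast
  rw [add_div]
  rfl

/-- The pairing `[b/p^k]` on `ℤ/p^kℤ`, sending `([v],[v'])` to
`b·v·v'/p^k mod ℤ`, computed on the canonical representatives `val`. -/
noncomputable def lpk (p k : ℕ) (b : ℤ) (v w : ZMod (p ^ k)) : AddCircle (1 : ℚ) :=
  ((((b * (v.val : ℤ) * (w.val : ℤ) : ℤ) : ℚ) / ((p : ℚ) ^ k) : ℚ) : AddCircle (1 : ℚ))

/-- For an odd prime `p`, `k ≥ 1` and `d` a quadratic
non-residue mod `p`, the pairing `[d/p^k] ⊕ [d/p^k]` on `(ℤ/p^kℤ)²` is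
isomorphic to `[1/p^k] ⊕ [1/p^k]`. -/
theorem stmt6 (p : ℕ) (hp : p.Prime) (hodd : Odd p) (k : ℕ) (hk : 1 ≤ k) (d : ℤ)
    (hd : ¬ IsSquare (d : ZMod p)) :
    ∃ f : (ZMod (p ^ k) × ZMod (p ^ k)) ≃+ (ZMod (p ^ k) × ZMod (p ^ k)),
      ∀ x y : ZMod (p ^ k) × ZMod (p ^ k),
        lpk p k 1 (f x).1 (f y).1 + lpk p k 1 (f x).2 (f y).2 =
          lpk p k d x.1 y.1 + lpk p k d x.2 y.2 := by
  haveI : Fact p.Prime := ⟨hp⟩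
  have hp0 : p ≠ 0 := hp.ne_zero
  have hpd : ¬ (p:ℤ) ∣ d := by
    intro h
    exact hd (by rw [(ZMod.intCast_zmod_eq_zero_iff_dvd d p).mpr h]; exact ⟨0, by simp⟩)
  obtain ⟨a, b, ha, hab⟩ := sq_add_sq_lift p hp hodd d hpd k hk
  set A : ZMod (p^k) := ((a : ℤ) : ZMod (p^k)) with hA
  set B : ZMod (p^k) := ((b : ℤ) : ZMod (p^k)) with hB
  set D : ZMod (p^k) := ((d : ℤ) : ZMod (p^k)) with hD
  have hABD : A^2 + B^2 = D := by
    have : ((a^2 + b^2 : ℤ) : ZMod (p^k)) = ((d : ℤ) : ZMod (p^k)) := by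
      rw [ZMod.intCast_eq_intCast_iff]
      exact_mod_cast hab
    rw [hA, hB, hD]
    push_cast at this ⊢
    exact this
  -- D is a unit
  have hcop : IsCoprime (d : ℤ) ((p:ℤ)^k) := by
    apply IsCoprime.pow_right
    rw [Int.isCoprime_iff_gcd_eq_one]
    rcases Nat.coprime_or_dvd_of_prime hp d.natAbs with h | h
    · simpa [Int.gcd, Nat.coprime_comm] using h
    · exact absurd (Int.dvd_natAbs.mp (Int.natCast_dvd_natCast.mpr h)) hpd
  have hu : IsUnit D := by
    have := hcop.map (Int.castRingHom (ZMod (p^k)))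
    simp only [map_pow, map_natCast, eq_intCast] at this
    rw [show ((p : ZMod (p^k)))^k = 0 by rw [← Nat.cast_pow, ZMod.natCast_self]] at this
    exact isCoprime_zero_right.mp this
  set u : ZMod (p^k) := ↑hu.unit⁻¹ with hu'
  have huD : u * D = 1 := hu.val_inv_mul
  refine ⟨{
    toFun := fun x => (A * x.1 - B * x.2, B * x.1 + A * x.2)
    invFun := fun x => (u * (A * x.1 + B * x.2), u * (-(B * x.1) + A * x.2))
    left_inv := by
      intro x
      ext
      · show u * (A * (A * x.1 - B * x.2) + B * (B * x.1 + A * x.2)) = x.1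
        linear_combination (u * x.1) * hABD + x.1 * huD
      · show u * (-(B * (A * x.1 - B * x.2)) + A * (B * x.1 + A * x.2)) = x.2
        linear_combination (u * x.2) * hABD + x.2 * huD
    right_inv := by
      intro x
      ext
      · show A * (u * (A * x.1 + B * x.2)) - B * (u * (-(B * x.1) + A * x.2)) = x.1
        linear_combination (u * x.1) * hABD + x.1 * huD
      · show B * (u * (A * x.1 + B * x.2)) + A * (u * (-(B * x.1) + A * x.2)) = x.2
        linear_combination (u * x.2) * hABD + x.2 * huD
    map_add' := by
      intro x y
      ext
      · show A * (x.1 + y.1) - B * (x.2 + y.2) = (A * x.1 - B * x.2) + (A * y.1 - B * y.2)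
        ring
      · show B * (x.1 + y.1) + A * (x.2 + y.2) = (B * x.1 + A * x.2) + (B * y.1 + A * y.2)
        ring }, ?_⟩
  intro x y
  simp only [lpk, AddEquiv.coe_mk, Equiv.coe_fn_mk]
  rw [lpk_add, lpk_add]
  apply lpk_cong p k hp0
  push_cast
  simp only [ZMod.natCast_val, ZMod.cast_id]
  linear_combination (x.1 * y.1 + x.2 * y.2) * (hABD.trans hD)
end

section
/- Let k ≥ 3 be an integer and ε = ±1. Then the orthogonal direct sum [3ε/2^k] ⊕ [3ε/2^k] on (ℤ/2^kℤ)² is isomorphic, as a pairing, to [−ε/2^k] ⊕ [−ε/2^k]. -/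
theorem Int.exists_sq_sub_dvd_two_pow {c : ℤ} (hc : 8 ∣ c - 1) (k : ℕ) :
    ∃ s : ℤ, 2 ^ k ∣ s ^ 2 - c := by
  induction k with
  | zero => exact ⟨0, by simp⟩
  | succ n ih =>
    rcases Nat.lt_or_ge n 3 with hn | hn
    · refine ⟨1, (pow_dvd_pow 2 (by omega : n + 1 ≤ 3)).trans ?_⟩
      norm_num
      exact dvd_sub_comm.mp hc
    obtain ⟨s, t, ht⟩ := ih
    obtain ⟨m, rfl⟩ : ∃ m, n = m + 3 := ⟨n - 3, by omega⟩
    have hs : Odd s := by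
      obtain ⟨d, hd⟩ := hc
      rw [← Int.odd_pow' two_ne_zero]
      exact ⟨2 ^ (m + 2) * t + 4 * d, by linear_combination ht + hd⟩
    rcases Int.even_or_odd t with ⟨u, hu⟩ | hto
    · exact ⟨s, u, by linear_combination ht + 2 ^ (m + 3) * hu⟩
    -- otherwise correct `s` by `2^(n-1)`, which changes `s²` by `2^n s` modulo `2^(n+1)`
    · obtain ⟨u, hu⟩ := hto.add_odd hs
      exact ⟨s + 2 ^ (m + 2), u + 2 ^ m, by linear_combination ht + 2 ^ (m + 3) * hu⟩

theorem AddCircle.coe_intCast_div_eq_of_intCast_eq (n : ℕ) {a b : ℤ}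
    (h : (a : ZMod n) = b) :
    ((a / n : ℚ) : AddCircle (1 : ℚ)) = ((b / n : ℚ) : AddCircle (1 : ℚ)) := by
  obtain ⟨c, hc⟩ := (ZMod.intCast_eq_intCast_iff_dvd_sub a b n).mp h
  rcases eq_or_ne n 0 with rfl | hn
  · simp
  have hab : (a / n : ℚ) = b / n + (-c : ℤ) := by
    have hb : (b : ℚ) = a + n * c := by exact_mod_cast (by linear_combination hc : b = a + n * c)
    rw [hb]
    field_simp
    push_cast
    ring
  have hc0 : (((-c : ℤ) : ℚ) : AddCircle (1 : ℚ)) = 0 :=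
    (AddCircle.coe_eq_zero_iff _).mpr ⟨-c, by simp⟩
  rw [hab, AddCircle.coe_add, hc0, add_zero]

theorem lpk_add_lpk (p k : ℕ) (b b' : ℤ) (v w v' w' : ZMod (p ^ k)) :
    lpk p k b v w + lpk p k b' v' w' =
      (((b * v.val * w.val + b' * v'.val * w'.val : ℤ) / (p ^ k : ℕ) : ℚ) :
        AddCircle (1 : ℚ)) := by
  rw [lpk, lpk, ← AddCircle.coe_add, ← add_div]
  push_cast
  rfl

section GaussMul

variable {R : Type*} [CommRing R]

/-- Multiplication by `a + b i` on `R[i] = R × R`, invertible when its norm `a² + b²` is a unit. -/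
noncomputable def gaussMulEquiv (a b : R) (h : IsUnit (a ^ 2 + b ^ 2)) : (R × R) ≃+ (R × R) where
  toFun x := (a * x.1 - b * x.2, b * x.1 + a * x.2)
  invFun x := (↑h.unit⁻¹ * (a * x.1 + b * x.2), ↑h.unit⁻¹ * (a * x.2 - b * x.1))
  left_inv x := by
    have hu := h.val_inv_mul
    ext
    · dsimp; linear_combination x.1 * hu
    · dsimp; linear_combination x.2 * hu
  right_inv x := by
    have hu := h.val_inv_mul
    ext
    · dsimp; linear_combination x.1 * hu
    · dsimp; linear_combination x.2 * hu
  map_add' x y := by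
    ext <;> dsimp <;> ring

theorem gaussMulEquiv_dot (a b : R) (h : IsUnit (a ^ 2 + b ^ 2)) (x y : R × R) :
    (gaussMulEquiv a b h x).1 * (gaussMulEquiv a b h y).1 +
        (gaussMulEquiv a b h x).2 * (gaussMulEquiv a b h y).2 =
      (a ^ 2 + b ^ 2) * (x.1 * y.1 + x.2 * y.2) := by
  simp only [gaussMulEquiv, AddEquiv.coe_mk, Equiv.coe_fn_mk]
  ring

end GaussMul

theorem stmt7_general (k : ℕ) (ε : ℤ) :
    ∃ f : (ZMod (2 ^ k) × ZMod (2 ^ k)) ≃+ (ZMod (2 ^ k) × ZMod (2 ^ k)),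
      ∀ x y : ZMod (2 ^ k) × ZMod (2 ^ k),
        lpk 2 k (-ε) (f x).1 (f y).1 + lpk 2 k (-ε) (f x).2 (f y).2 =
          lpk 2 k (3 * ε) x.1 y.1 + lpk 2 k (3 * ε) x.2 y.2 := by
  obtain ⟨s, hs⟩ := Int.exists_sq_sub_dvd_two_pow (c := -7) (by norm_num) k
  have hnorm : (s : ZMod (2 ^ k)) ^ 2 + 2 ^ 2 = -3 := by
    have := (ZMod.intCast_zmod_eq_zero_iff_dvd _ (2 ^ k)).mpr (by exact_mod_cast hs)
    push_cast at this
    linear_combination this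
  have hunit : IsUnit ((s : ZMod (2 ^ k)) ^ 2 + 2 ^ 2) := by
    rw [hnorm, IsUnit.neg_iff]
    exact_mod_cast (ZMod.isUnit_iff_coprime 3 (2 ^ k)).mpr (Nat.Coprime.pow_right k (by norm_num))
  refine ⟨gaussMulEquiv _ _ hunit, fun x y => ?_⟩
  rw [lpk_add_lpk, lpk_add_lpk]
  apply AddCircle.coe_intCast_div_eq_of_intCast_eq
  push_cast [ZMod.natCast_val, ZMod.cast_id]
  linear_combination (-ε : ZMod (2 ^ k)) * gaussMulEquiv_dot _ _ hunit x y +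
    (-ε * (x.1 * y.1 + x.2 * y.2) : ZMod (2 ^ k)) * hnorm

/-- For `k ≥ 3` and `ε = ±1`, the pairing
`[3ε/2^k] ⊕ [3ε/2^k]` on `(ℤ/2^kℤ)²` is isomorphic to `[−ε/2^k] ⊕ [−ε/2^k]`. -/
theorem stmt7 (k : ℕ) (hk : 3 ≤ k) (ε : ℤ) (hε : ε = 1 ∨ ε = -1) :
    ∃ f : (ZMod (2 ^ k) × ZMod (2 ^ k)) ≃+ (ZMod (2 ^ k) × ZMod (2 ^ k)),
      ∀ x y : ZMod (2 ^ k) × ZMod (2 ^ k),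
        lpk 2 k (-ε) (f x).1 (f y).1 + lpk 2 k (-ε) (f x).2 (f y).2 =
          lpk 2 k (3 * ε) x.1 y.1 + lpk 2 k (3 * ε) x.2 y.2 :=
  stmt7_general k ε
end

section
/- Let N be a nonzero integer and let r ∈ ℚ lie in ℤ[1/N]. Then for every natural number n, the generalized binomial coefficient C(r, n) = r(r−1)⋯(r−n+1)/n! lies in ℤ[1/N]. Equivalently, the binomial power series (1+h)^r = Σ_{n≥0} C(r,n) h^n has all of its coefficients in ℤ[1/N]. -/
/-!
Write `r = m / d` with `d = N ^ k`. Then `n! * d ^ n * C(r, n) = P := ∏_{i<n} (m - i d)`, so it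
suffices that `n!` divides `N ^ K * P` for some `K`. Split off from `n!` a divisor `B` coprime to
`N` with `n! ∣ B * N ^ K`. Modulo `B` the number `d` has an inverse `e`, so
`P ≡ d ^ n * ∏_{i<n} (e m - i)`, a multiple of a product of `n` consecutive integers,
hence of `n!` and of `B`.
-/

/-- The generalized binomial coefficient `C(r, n) = r(r−1)⋯(r−n+1)/n!`, i.e. the
coefficient of `h^n` in the binomial power series `(1+h)^r`. -/
noncomputable def gbinom (r : ℚ) (n : ℕ) : ℚ :=
  (∏ i ∈ Finset.range n, (r - (i : ℚ))) / (n.factorial : ℚ)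

open Finset Nat

theorem Int.factorial_dvd_prod_range_sub (a : ℤ) (n : ℕ) :
    (n ! : ℤ) ∣ ∏ i ∈ Finset.range n, (a - i) := by
  rw [← descPochhammer_eval_eq_prod_range, Polynomial.eval_eq_smeval,
    Ring.descPochhammer_eq_factorial_smul_choose, nsmul_eq_mul]
  exact dvd_mul_right _ _

theorem Int.dvd_prod_range_sub_mul {B d : ℤ} {n : ℕ} (hB : B ∣ n !) (hd : IsCoprime d B)
    (m : ℤ) : B ∣ ∏ i ∈ Finset.range n, (m - i * d) := by
  obtain ⟨e, f, hef⟩ := hd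
  have hmod : ∏ i ∈ Finset.range n, (m - i * d) ≡
      ∏ i ∈ Finset.range n, d * (e * m - i) [ZMOD B] :=
    Int.ModEq.prod fun i _ ↦ Int.modEq_iff_dvd.mpr ⟨-(f * m), by linear_combination m * hef⟩
  rw [prod_mul_distrib] at hmod
  exact (Int.ModEq.dvd_iff hmod).mpr <|
    (hB.trans (Int.factorial_dvd_prod_range_sub _ n)).mul_left _

theorem Nat.exists_dvd_coprime_dvd_mul_pow (M : ℕ) {F : ℕ} (hF : 0 < F) :
    ∃ B, B ∣ F ∧ B.Coprime M ∧ ∃ K, F ∣ B * M ^ K := by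
  induction F using Nat.strong_induction_on with
  | _ F ih =>
    by_cases hg : F.Coprime M
    · exact ⟨F, dvd_rfl, hg, 0, by simp⟩
    obtain ⟨F', hF'⟩ := F.gcd_dvd_left M
    have hF'pos : 0 < F' := Nat.pos_of_mul_pos_left (hF'.symm ▸ hF)
    have hlt : F' < F := by
      rw [hF']
      exact lt_mul_left hF'pos (lt_of_le_of_ne (Nat.gcd_pos_of_pos_left M hF) (Ne.symm hg))
    obtain ⟨B, hBF', hBM, K, hK⟩ := ih F' hlt hF'pos
    refine ⟨B, hBF'.trans ⟨_, hF'.trans (mul_comm _ _)⟩, hBM, K + 1, ?_⟩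
    rw [hF', pow_succ, ← mul_assoc, mul_comm]
    exact mul_dvd_mul hK (F.gcd_dvd_right M)

theorem exists_factorial_dvd_pow_mul_prod_range_sub (N m : ℤ) (k n : ℕ) :
    ∃ K : ℕ, (n ! : ℤ) ∣ N ^ K * ∏ i ∈ Finset.range n, (m - i * N ^ k) := by
  obtain ⟨B, hBF, hBN, K, hK⟩ := Nat.exists_dvd_coprime_dvd_mul_pow N.natAbs n.factorial_pos
  have hcop : IsCoprime (N ^ k) (B : ℤ) :=
    (Int.isCoprime_iff_gcd_eq_one.mpr (by simpa [Int.gcd, Nat.coprime_comm] using hBN)).pow_left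
  have hBP := Int.dvd_prod_range_sub_mul (Int.natCast_dvd_natCast.mpr hBF) hcop m
  refine ⟨K, (Int.natCast_dvd_natCast.mpr hK).trans ?_⟩
  push_cast
  rw [mul_comm (N ^ K)]
  exact mul_dvd_mul hBP (pow_dvd_pow_of_dvd (abs_dvd_self N) K)

theorem gbinom_intCast_div (m d : ℤ) (hd : d ≠ 0) (n : ℕ) :
    gbinom (m / d) n = (∏ i ∈ Finset.range n, (m - i * d) : ℤ) / (d ^ n * n ! : ℤ) := by
  have hd' : (d : ℚ) ≠ 0 := Int.cast_ne_zero.mpr hd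
  have hfactor : ∀ i : ℕ, (m / d - i : ℚ) = (m - i * d) / d := fun i ↦ by field_simp
  simp only [gbinom, hfactor, prod_div_distrib, prod_const, card_range, div_div]
  push_cast
  rfl

/-- If `N` is a nonzero integer and `r ∈ ℤ[1/N]`, then every
generalized binomial coefficient `C(r, n)` lies in `ℤ[1/N]`; equivalently, all
coefficients of the binomial series `(1+h)^r` lie in `ℤ[1/N]`. -/
theorem stmt12 (N : ℤ) (hN : N ≠ 0) (r : ℚ)
    (hr : ∃ (m : ℤ) (k : ℕ), r = (m : ℚ) / (N : ℚ) ^ k) :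
    ∀ n : ℕ, ∃ (m' : ℤ) (k' : ℕ), gbinom r n = (m' : ℚ) / (N : ℚ) ^ k' := by
  obtain ⟨m, k, rfl⟩ := hr
  intro n
  obtain ⟨K, c, hc⟩ := exists_factorial_dvd_pow_mul_prod_range_sub N m k n
  refine ⟨c, K + k * n, ?_⟩
  have hNk : ((N ^ k : ℤ) : ℚ) = (N : ℚ) ^ k := Int.cast_pow N k
  rw [← hNk, gbinom_intCast_div m _ (pow_ne_zero k hN), div_eq_div_iff, pow_add, pow_mul, ← hNk]
  · exact_mod_cast by linear_combination (N ^ k) ^ n * hc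
  all_goals simp [hN, Nat.factorial_ne_zero]
end
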